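/- Let T be the group of finitary permutations of the positive integers (those σ with σ(k) = k for all but finitely many k), acting on 𝔅 via σ ↦ f_σ. Then for every x ∈ 𝔅 \ {0}, the orbit xT equals 𝔅 \ {0} and the pair (0, x) is proximal for (𝔅, T); in particular (𝔅, T) is not distal. -/

import Mathlib

open Pointwise Classical

/-- 𝔅 = {0} ∪ {1/n : n a positive integer} as a subspace of ℝ. -/
def Bset : Set ℝ := {x | x = 0 ∨ ∃ n : ℕ+, x = 1 / ((n : ℕ) : ℝ)}

/-- The homeomorphism `f_σ` of `𝔅` induced by a permutation `σ` of the positive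
integers: `(1/k) f_σ = 1/σ(k)` and `0 f_σ = 0`. -/
noncomputable def fPerm (σ : Equiv.Perm ℕ+) (x : Bset) : Bset :=
  if h : ∃ n : ℕ+, (x : ℝ) = 1 / ((n : ℕ) : ℝ) then
    ⟨1 / (((σ h.choose : ℕ+) : ℕ) : ℝ), Or.inr ⟨σ h.choose, rfl⟩⟩
  else ⟨0, Or.inl rfl⟩

/-- The pair `(x, y)` is proximal for the set `S` of self-maps of `X`. -/
def IsProximal {X : Type*} [TopologicalSpace X] (S : Set (X → X)) (x y : X) : Prop :=
  ∃ z : X, (z, z) ∈ closure {p : X × X | ∃ f ∈ S, p = (f x, f y)}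

/-- The action of the set `S` of self-maps of `X` is distal. -/
def IsDistalAction {X : Type*} [TopologicalSpace X] (S : Set (X → X)) : Prop :=
  ∀ x y : X, IsProximal S x y → x = y

/-- The set of self-maps of `𝔅` induced by a set of permutations. -/
noncomputable def permAct (S : Set (Equiv.Perm ℕ+)) : Set (Bset → Bset) :=
  {f | ∃ σ ∈ S, f = fPerm σ}

/-- The orbit `xS` of a point of `𝔅`. -/
def pointOrbit (x : Bset) (S : Set (Equiv.Perm ℕ+)) : Set Bset :=
  {y | ∃ σ ∈ S, y = fPerm σ x}

/-- `P S = {x σ : x ∈ P, σ ∈ S}`, the action of a set of permutations on a set of points. -/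
def actSet (P : Set Bset) (S : Set (Equiv.Perm ℕ+)) : Set Bset :=
  {y | ∃ x ∈ P, ∃ σ ∈ S, y = fPerm σ x}

/-- `T_n`: permutations fixing every `k > n`. -/
def TnSet (n : ℕ+) : Set (Equiv.Perm ℕ+) := {σ | ∀ k : ℕ+, n < k → σ k = k}

/-- `T`: the finitary permutations of the positive integers. -/
def Tfin : Set (Equiv.Perm ℕ+) := {σ | ∃ n : ℕ+, ∀ k : ℕ+, n < k → σ k = k}

noncomputable def onePt : Bset := ⟨1, Or.inr ⟨1, by norm_num⟩⟩
def zeroPt : Bset := ⟨0, Or.inl rfl⟩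

/-!
A transposition `(n m)` sends `1/n` to `1/m` and fixes `0`. Hence every nonzero point of `𝔅`
is moved anywhere in `𝔅 \ {0}`, and taking `m → ∞` drives `1/n` to `0` while `0` stays put,
so `(0, 1/n)` is a proximal pair of distinct points.
-/

open Filter Topology

lemma one_div_pnat_injective {n m : ℕ+} (h : (1 : ℝ) / ((n : ℕ) : ℝ) = 1 / ((m : ℕ) : ℝ)) :
    n = m := by
  rw [one_div, one_div, inv_inj] at h
  exact PNat.coe_inj.mp (by exact_mod_cast h)

lemma one_div_pnat_ne_zero (n : ℕ+) : (1 : ℝ) / ((n : ℕ) : ℝ) ≠ 0 :=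
  one_div_ne_zero (by exact_mod_cast n.ne_zero)

lemma Bset.exists_pnat_of_ne_zero {x : Bset} (hx : (x : ℝ) ≠ 0) :
    ∃ n : ℕ+, (x : ℝ) = 1 / ((n : ℕ) : ℝ) :=
  x.2.resolve_left hx

lemma fPerm_coe_of_eq_one_div (σ : Equiv.Perm ℕ+) {x : Bset} {n : ℕ+}
    (hx : (x : ℝ) = 1 / ((n : ℕ) : ℝ)) :
    ((fPerm σ x : Bset) : ℝ) = 1 / (((σ n : ℕ+) : ℕ) : ℝ) := by
  have h : ∃ m : ℕ+, (x : ℝ) = 1 / ((m : ℕ) : ℝ) := ⟨n, hx⟩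
  rw [fPerm, dif_pos h]
  exact congrArg (fun k => 1 / (((σ k : ℕ+) : ℕ) : ℝ))
    (one_div_pnat_injective (h.choose_spec.symm.trans hx))

lemma fPerm_zeroPt (σ : Equiv.Perm ℕ+) : fPerm σ zeroPt = zeroPt := by
  have h : ¬ ∃ m : ℕ+, ((zeroPt : Bset) : ℝ) = 1 / ((m : ℕ) : ℝ) := by
    rintro ⟨m, hm⟩
    exact one_div_pnat_ne_zero m hm.symm
  rw [fPerm, dif_neg h]
  rfl

lemma swap_mem_Tfin (n m : ℕ+) : Equiv.swap n m ∈ Tfin :=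
  ⟨max n m, fun _ hk =>
    Equiv.swap_apply_of_ne_of_ne (ne_of_gt (lt_of_le_of_lt (le_max_left n m) hk))
      (ne_of_gt (lt_of_le_of_lt (le_max_right n m) hk))⟩

section Transpositions

variable {S : Set (Equiv.Perm ℕ+)} (hS : ∀ n m : ℕ+, Equiv.swap n m ∈ S)
include hS

lemma pointOrbit_eq_of_swap_mem {x : Bset} (hx : (x : ℝ) ≠ 0) :
    pointOrbit x S = {y : Bset | (y : ℝ) ≠ 0} := by
  obtain ⟨n, hn⟩ := Bset.exists_pnat_of_ne_zero hx
  ext y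
  constructor
  · rintro ⟨σ, -, rfl⟩
    rw [Set.mem_ofPred_eq, fPerm_coe_of_eq_one_div σ hn]
    exact one_div_pnat_ne_zero _
  · intro hy
    obtain ⟨m, hm⟩ := Bset.exists_pnat_of_ne_zero hy
    refine ⟨Equiv.swap n m, hS n m, Subtype.ext ?_⟩
    rw [fPerm_coe_of_eq_one_div _ hn, Equiv.swap_apply_left, hm]

lemma isProximal_zeroPt_of_swap_mem {x : Bset} (hx : (x : ℝ) ≠ 0) :
    IsProximal (permAct S) zeroPt x := by
  obtain ⟨n, hn⟩ := Bset.exists_pnat_of_ne_zero hx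
  let σ : ℕ → Equiv.Perm ℕ+ := fun k => Equiv.swap n k.succPNat
  have hσx : Tendsto (fun k => fPerm (σ k) x) atTop (𝓝 zeroPt) := by
    rw [tendsto_subtype_rng]
    change Tendsto _ _ (𝓝 (0 : ℝ))
    have hcoe : ∀ k : ℕ, ((fPerm (σ k) x : Bset) : ℝ) = 1 / ((k : ℝ) + 1) := fun k => by
      rw [fPerm_coe_of_eq_one_div _ hn, Equiv.swap_apply_left, Nat.succPNat_coe]
      push_cast
      rfl
    simpa only [hcoe] using tendsto_one_div_add_atTop_nhds_zero_nat
  refine ⟨zeroPt, mem_closure_of_tendsto (tendsto_const_nhds.prodMk_nhds hσx) ?_⟩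
  exact Eventually.of_forall fun k => ⟨fPerm (σ k), ⟨σ k, hS _ _, rfl⟩, by rw [fPerm_zeroPt]⟩

end Transpositions

/-- For the group `T` of finitary permutations acting on `𝔅`: for every
`x ∈ 𝔅 \ {0}` the orbit `xT` equals `𝔅 \ {0}` and `(0, x)` is a proximal pair; in
particular `(𝔅, T)` is not distal. -/
theorem stmt7 :
    (∀ x : Bset, (x : ℝ) ≠ 0 →
      pointOrbit x Tfin = {y : Bset | (y : ℝ) ≠ 0} ∧
      IsProximal (permAct Tfin) zeroPt x) ∧
    ¬ IsDistalAction (permAct Tfin) := by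
  refine ⟨fun x hx => ⟨pointOrbit_eq_of_swap_mem swap_mem_Tfin hx,
    isProximal_zeroPt_of_swap_mem swap_mem_Tfin hx⟩, fun hdistal => ?_⟩
  have h : zeroPt = onePt := hdistal _ _ (isProximal_zeroPt_of_swap_mem swap_mem_Tfin one_ne_zero)
  exact zero_ne_one (congrArg Subtype.val h)
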